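/- For every twice continuously differentiable matrix field A : ℝ³ → so(3) taking values in the skew-symmetric 3×3 matrices, the matrix Curl((Curl A)ᵀ) is skew-symmetric at every point of ℝ³. -/

import Mathlib

open Matrix

/-- Partial derivative in direction `j` of a scalar field on `ℝ³`. -/
noncomputable def pd (j : Fin 3) (f : (Fin 3 → ℝ) → ℝ) (x : Fin 3 → ℝ) : ℝ :=
  fderiv ℝ f x (Pi.single j 1)

/-- Gradient of a scalar field on `ℝ³`. -/
noncomputable def grad3 (f : (Fin 3 → ℝ) → ℝ) (x : Fin 3 → ℝ) : Fin 3 → ℝ :=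
  fun i => pd i f x

/-- Classical curl of a vector field on `ℝ³`. -/
noncomputable def vcurl (v : (Fin 3 → ℝ) → Fin 3 → ℝ) (x : Fin 3 → ℝ) : Fin 3 → ℝ :=
  ![pd 1 (fun y => v y 2) x - pd 2 (fun y => v y 1) x,
    pd 2 (fun y => v y 0) x - pd 0 (fun y => v y 2) x,
    pd 0 (fun y => v y 1) x - pd 1 (fun y => v y 0) x]

/-- Divergence of a vector field on `ℝ³`. -/
noncomputable def vdiv (v : (Fin 3 → ℝ) → Fin 3 → ℝ) (x : Fin 3 → ℝ) : ℝ :=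
  ∑ i, pd i (fun y => v y i) x

/-- Row-wise Curl of a matrix field on `ℝ³`: the `i`-th row of `mCurl P`
is the curl of the `i`-th row of `P`. -/
noncomputable def mCurl (P : (Fin 3 → ℝ) → Matrix (Fin 3) (Fin 3) ℝ) (x : Fin 3 → ℝ) :
    Matrix (Fin 3) (Fin 3) ℝ :=
  Matrix.of fun i j => vcurl (fun y => P y i) x j

/-- Jacobian matrix of a vector field on `ℝ³`. -/
noncomputable def jac (v : (Fin 3 → ℝ) → Fin 3 → ℝ) (x : Fin 3 → ℝ) :
    Matrix (Fin 3) (Fin 3) ℝ :=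
  Matrix.of fun i j => pd j (fun y => v y i) x

/-- Axial vector of a (skew-symmetric) `3 × 3` matrix: with `A 1 2 = -a₁`,
`A 2 0 = -a₂`, `A 0 1 = -a₃` (so `A 2 1 = a₁`, `A 0 2 = a₂`, `A 1 0 = a₃`). -/
def axl (A : Matrix (Fin 3) (Fin 3) ℝ) : Fin 3 → ℝ :=
  ![A 2 1, A 0 2, A 1 0]

/-- The skew-symmetric matrix `anti a` characterized by `(anti a) ⬝ v = a × v`. -/
def antiM (a : Fin 3 → ℝ) : Matrix (Fin 3) (Fin 3) ℝ :=
  !![0, -a 2, a 1; a 2, 0, -a 0; -a 1, a 0, 0]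

/-- Symmetric part of a matrix. -/
noncomputable def symM (X : Matrix (Fin 3) (Fin 3) ℝ) : Matrix (Fin 3) (Fin 3) ℝ :=
  (1 / 2 : ℝ) • (X + Xᵀ)

/-- Skew-symmetric part of a matrix. -/
noncomputable def skewM (X : Matrix (Fin 3) (Fin 3) ℝ) : Matrix (Fin 3) (Fin 3) ℝ :=
  (1 / 2 : ℝ) • (X - Xᵀ)

/-- Deviatoric (trace-free) part of a matrix. -/
noncomputable def devM (X : Matrix (Fin 3) (Fin 3) ℝ) : Matrix (Fin 3) (Fin 3) ℝ :=
  X - (Matrix.trace X / 3) • (1 : Matrix (Fin 3) (Fin 3) ℝ)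

/-- Frobenius inner product `⟨X, Y⟩ = tr (X Yᵀ)`. -/
noncomputable def minner (X Y : Matrix (Fin 3) (Fin 3) ℝ) : ℝ :=
  Matrix.trace (X * Yᵀ)

/-- Squared Frobenius norm. -/
noncomputable def mnormSq (X : Matrix (Fin 3) (Fin 3) ℝ) : ℝ :=
  minner X X

/-- Squared Euclidean norm of a vector in `ℝ³`. -/
def vnormSq (v : Fin 3 → ℝ) : ℝ :=
  ∑ i, (v i) ^ 2

/-! The incompatibility operator `inc P = Curl ((Curl P)ᵀ)` involves only the mixed second
derivatives `∂ₚ∂ᵣ P_{sq}` weighted by `ε_{ipq} ε_{jrs}`. Swapping `i ↔ j` therefore amounts, by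
symmetry of second derivatives, to transposing `P`: `(inc P)ᵀ = inc Pᵀ`. Since `inc` is linear,
a skew-symmetric `A` gives `(inc A)ᵀ = inc (-A) = -inc A`. -/

noncomputable def incM (P : (Fin 3 → ℝ) → Matrix (Fin 3) (Fin 3) ℝ) (x : Fin 3 → ℝ) :
    Matrix (Fin 3) (Fin 3) ℝ :=
  mCurl (fun y => (mCurl P y)ᵀ) x

lemma pd_neg (j : Fin 3) (f : (Fin 3 → ℝ) → ℝ) (x : Fin 3 → ℝ) :
    pd j (fun y => -f y) x = -pd j f x := by
  rw [pd, fderiv_fun_neg]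
  rfl

lemma pd_sub {f g : (Fin 3 → ℝ) → ℝ} (hf : Differentiable ℝ f) (hg : Differentiable ℝ g)
    (j : Fin 3) (x : Fin 3 → ℝ) :
    pd j (fun y => f y - g y) x = pd j f x - pd j g x := by
  rw [pd, fderiv_fun_sub (hf x) (hg x)]
  rfl

lemma contDiff_pd {f : (Fin 3 → ℝ) → ℝ} (hf : ContDiff ℝ 2 f) (j : Fin 3) :
    ContDiff ℝ 1 (pd j f) :=
  (hf.fderiv_right (m := 1) (by norm_num)).clm_apply contDiff_const

lemma pd_pd_comm {f : (Fin 3 → ℝ) → ℝ} (hf : ContDiff ℝ 2 f) (i j : Fin 3) (x : Fin 3 → ℝ) :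
    pd i (pd j f) x = pd j (pd i f) x := by
  have hDf : DifferentiableAt ℝ (fderiv ℝ f) x :=
    (hf.fderiv_right (m := 1) le_rfl).differentiable (by norm_num) x
  have hpd_pd : ∀ k l,
      pd k (pd l f) x = fderiv ℝ (fderiv ℝ f) x (Pi.single k 1) (Pi.single l 1) := by
    intro k l
    change fderiv ℝ (fun y => fderiv ℝ f y (Pi.single l 1)) x (Pi.single k 1) = _
    simp [fderiv_clm_apply hDf (differentiableAt_const _)]
  rw [hpd_pd, hpd_pd]
  exact second_derivative_symmetric (fun y => (hf.differentiable (by norm_num) y).hasFDerivAt)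
    hDf.hasFDerivAt _ _

lemma vcurl_apply (v : (Fin 3 → ℝ) → Fin 3 → ℝ) (x : Fin 3 → ℝ) (i : Fin 3) :
    vcurl v x i = pd (i + 1) (fun y => v y (i + 2)) x - pd (i + 2) (fun y => v y (i + 1)) x := by
  fin_cases i <;> rfl

lemma mCurl_neg (P : (Fin 3 → ℝ) → Matrix (Fin 3) (Fin 3) ℝ) :
    mCurl (fun y => -P y) = -mCurl P := by
  ext x i j
  simp only [mCurl, vcurl_apply, Matrix.of_apply, Matrix.neg_apply, Pi.neg_apply, pd_neg]
  ring

lemma incM_neg (P : (Fin 3 → ℝ) → Matrix (Fin 3) (Fin 3) ℝ) :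
    incM (fun y => -P y) = -incM P := by
  funext x
  simp only [incM, mCurl_neg, Pi.neg_apply, Matrix.transpose_neg]

lemma incM_apply {P : (Fin 3 → ℝ) → Matrix (Fin 3) (Fin 3) ℝ}
    (hP : ∀ a b, ContDiff ℝ 2 fun y => P y a b) (x : Fin 3 → ℝ) (i j : Fin 3) :
    incM P x i j =
      pd (j + 1) (pd (i + 1) fun y => P y (j + 2) (i + 2)) x
        - pd (j + 1) (pd (i + 2) fun y => P y (j + 2) (i + 1)) x
        - pd (j + 2) (pd (i + 1) fun y => P y (j + 1) (i + 2)) x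
        + pd (j + 2) (pd (i + 2) fun y => P y (j + 1) (i + 1)) x := by
  have hpd : ∀ k a b, Differentiable ℝ (pd k fun y => P y a b) := fun k a b =>
    (contDiff_pd (hP a b) k).differentiable (by norm_num)
  have hcurl : ∀ k, (fun y => (mCurl P y)ᵀ i k) =
      fun y => pd (i + 1) (fun z => P z k (i + 2)) y - pd (i + 2) (fun z => P z k (i + 1)) y :=
    fun k => funext fun y => vcurl_apply (fun z => P z k) y i
  rw [incM, mCurl, Matrix.of_apply, vcurl_apply, hcurl, hcurl, pd_sub (hpd _ _ _) (hpd _ _ _),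
    pd_sub (hpd _ _ _) (hpd _ _ _)]
  ring

lemma incM_transpose {P : (Fin 3 → ℝ) → Matrix (Fin 3) (Fin 3) ℝ}
    (hP : ∀ a b, ContDiff ℝ 2 fun y => P y a b) (x : Fin 3 → ℝ) :
    (incM P x)ᵀ = incM (fun y => (P y)ᵀ) x := by
  have hPt : ∀ a b, ContDiff ℝ 2 fun y => (P y)ᵀ a b := fun a b => hP b a
  ext i j
  rw [Matrix.transpose_apply, incM_apply hP, incM_apply hPt]
  simp only [Matrix.transpose_apply, pd_pd_comm (hP _ _) (i + _) (j + _)]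
  ring

/-- For a skew-symmetric matrix field A, the matrix Curl((Curl A)ᵀ) is
skew-symmetric. -/
theorem curl_curl_transpose_skew
    (A : (Fin 3 → ℝ) → Matrix (Fin 3) (Fin 3) ℝ)
    (hA_skew : ∀ x, (A x)ᵀ = -(A x))
    (hA_diff : ∀ i j, ContDiff ℝ 2 (fun y => A y i j)) :
    ∀ x : Fin 3 → ℝ,
      (mCurl (fun y => (mCurl A y)ᵀ) x)ᵀ = -(mCurl (fun y => (mCurl A y)ᵀ) x) := by
  intro x
  change (incM A x)ᵀ = -incM A x
  rw [incM_transpose hA_diff, funext hA_skew, incM_neg, Pi.neg_apply]
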